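/- arXiv:1604.08775 — 3 statements merged into one kernel-verified Lean document; each statement's English description precedes it below -/
import Mathlib

section
/- If G is a gate and v is a vertex of G, then v belongs to exactly two maximal cliques of G; moreover, if C_1 and C_2 are these two cliques, then C_1 ∩ C_2 = {v}. -/
/-- A maximal clique (a maximal complete vertex set) of a simple graph. -/
def IsMaxClique {V : Type} (G : SimpleGraph V) (s : Set V) : Prop :=
  G.IsClique s ∧ ∀ t : Set V, G.IsClique t → s ⊆ t → s = t

/-- The number of maximal cliques of a graph. -/
noncomputable def numMaxCliques {V : Type} (G : SimpleGraph V) : ℕ :=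
  {s : Set V | IsMaxClique G s}.ncard

/-- The graph obtained from `G` and a chordless path on `l` new vertices by joining the
first vertex of the path to every vertex of `A` and the last vertex to every vertex of `B`. -/
def joinPath {V : Type} (G : SimpleGraph V) (A B : Set V) (l : ℕ) :
    SimpleGraph (V ⊕ Fin l) where
  Adj x y :=
    match x, y with
    | Sum.inl a, Sum.inl b => G.Adj a b
    | Sum.inl a, Sum.inr i => (i.val = 0 ∧ a ∈ A) ∨ (i.val = l - 1 ∧ a ∈ B)
    | Sum.inr i, Sum.inl a => (i.val = 0 ∧ a ∈ A) ∨ (i.val = l - 1 ∧ a ∈ B)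
    | Sum.inr i, Sum.inr j => i.val + 1 = j.val ∨ j.val + 1 = i.val
  symm := by
    constructor
    rintro (a | i) (b | j) h <;> simp_all <;> tauto
  loopless := by
    constructor
    rintro (a | i) h
    · exact G.irrefl h
    · rcases h with h | h <;> omega

/-- Gates, defined recursively (up to isomorphism): chordless cycles `Cₙ`, `n ≥ 4`, are
gates, and joining a new chordless path to two disjoint maximal cliques of a gate
yields a gate. -/
inductive IsGate : {V : Type} → SimpleGraph V → Prop
  | cycle (n : ℕ) (hn : 4 ≤ n) : IsGate (SimpleGraph.cycleGraph n)
  | extend {V : Type} (G : SimpleGraph V) (C C' : Set V) (l : ℕ)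
      (hG : IsGate G) (hC : IsMaxClique G C) (hC' : IsMaxClique G C')
      (hdisj : Disjoint C C') (hl : 2 ≤ l) : IsGate (joinPath G C C' l)
  | iso {V W : Type} (G : SimpleGraph V) (H : SimpleGraph W)
      (hG : IsGate G) (e : G ≃g H) : IsGate H

/-- An EPT representation of `G`: a family of paths in a host tree such that two distinct
vertices are adjacent iff their paths share an edge of the tree. -/
structure EPTRep {V : Type} (G : SimpleGraph V) where
  VT : Type
  T : SimpleGraph VT
  tree : T.IsTree
  src : V → VT
  tgt : V → VT
  walk : (v : V) → T.Walk (src v) (tgt v)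
  isPath : ∀ v, (walk v).IsPath
  adj_iff : ∀ v w : V, v ≠ w →
    (G.Adj v w ↔ ∃ e : Sym2 VT, e ∈ (walk v).edges ∧ e ∈ (walk w).edges)

/-- The edge set of the path representing `v`. -/
def EPTRep.edges {V : Type} {G : SimpleGraph V} (R : EPTRep G) (v : V) :
    Set (Sym2 R.VT) := {e | e ∈ (R.walk v).edges}

/-- The representation is Helly: every nonempty pairwise edge-intersecting subfamily of
paths has a common edge. -/
def EPTRep.Helly {V : Type} {G : SimpleGraph V} (R : EPTRep G) : Prop :=
  ∀ S : Set V, S.Nonempty →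
    (∀ u ∈ S, ∀ v ∈ S, (R.edges u ∩ R.edges v).Nonempty) →
    (⋂ v ∈ S, R.edges v).Nonempty

/-- The host tree has maximum degree at most `h`. -/
def EPTRep.maxDegLE {V : Type} {G : SimpleGraph V} (R : EPTRep G) (h : ℕ) : Prop :=
  ∀ x : R.VT, (R.T.neighborSet x).ncard ≤ h

/-- The class `[h,2,2]`. -/
def InEPTClass (h : ℕ) {V : Type} (G : SimpleGraph V) : Prop :=
  ∃ R : EPTRep G, R.maxDegLE h

/-- Helly EPT graphs. -/
def IsHellyEPT {V : Type} (G : SimpleGraph V) : Prop :=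
  ∃ R : EPTRep G, R.Helly

/-- The class Helly `[h,2,2]`. -/
def InHellyClass (h : ℕ) {V : Type} (G : SimpleGraph V) : Prop :=
  ∃ R : EPTRep G, R.Helly ∧ R.maxDegLE h

/-- Three paths of the representation form a claw at some claw of the host tree. -/
def EPTRep.FormsClaw {V : Type} {G : SimpleGraph V} (R : EPTRep G) (a b c : V) : Prop :=
  ∃ q x y z : R.VT, R.T.Adj q x ∧ R.T.Adj q y ∧ R.T.Adj q z ∧
    x ≠ y ∧ y ≠ z ∧ x ≠ z ∧
    s(q, x) ∈ R.edges a ∧ s(q, y) ∈ R.edges a ∧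
    s(q, y) ∈ R.edges b ∧ s(q, z) ∈ R.edges b ∧
    s(q, x) ∈ R.edges c ∧ s(q, z) ∈ R.edges c

/-- A multipie of size `k` whose paths are those representing the vertices in `S`. -/
def IsMultipie {V : Type} {G : SimpleGraph V} (R : EPTRep G) (k : ℕ) (S : Set V) : Prop :=
  ∃ (q : R.VT) (qi : Fin k → R.VT), Function.Injective qi ∧
    (∀ i, R.T.Adj q (qi i)) ∧
    (∀ v ∈ S, {i : Fin k | qi i ∈ (R.walk v).support}.ncard = 2) ∧
    (∀ u ∈ S, ∀ v ∈ S, ∀ i j : Fin k, i ≠ j →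
      qi i ∈ (R.walk u).support → qi j ∈ (R.walk u).support →
      qi i ∈ (R.walk v).support → qi j ∈ (R.walk v).support → u = v) ∧
    (∀ i, 2 ≤ {v ∈ S | s(q, qi i) ∈ R.edges v}.ncard) ∧
    (∀ a ∈ S, ∀ b ∈ S, ∀ c ∈ S, ¬ R.FormsClaw a b c)

/-- The next index around a cycle. -/
def finNext {k : ℕ} (hk : 0 < k) (i : Fin k) : Fin k :=
  ⟨(i.val + 1) % k, Nat.mod_lt _ hk⟩

/-- `G` has a clique separator: a complete vertex set whose removal disconnects the graph. -/
def HasCliqueSep {V : Type} (G : SimpleGraph V) : Prop :=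
  ∃ C : Set V, G.IsClique C ∧ ¬ (G.induce Cᶜ).Preconnected

/-- An atom of `G`: a maximal vertex subset inducing a connected subgraph without clique
separators. -/
def IsAtomOf {V : Type} (G : SimpleGraph V) (A : Set V) : Prop :=
  (G.induce A).Connected ∧ ¬ HasCliqueSep (G.induce A) ∧
    ∀ B : Set V, A ⊆ B → (G.induce B).Connected → ¬ HasCliqueSep (G.induce B) → A = B


/-!
Call `v` *split* by `X` and `Y` (`IsNbhdSplit G v X Y`) when `X` and `Y` are cliques meeting
exactly in `v`, each with another vertex, covering the neighbourhood of `v`, with no edge between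
`X \ {v}` and `Y \ {v}`.
A clique through `v` then cannot meet both `X \ {v}` and `Y \ {v}`, so it lies in `X` or in `Y`:
the maximal cliques through `v` are exactly `X` and `Y`.

Every vertex of a gate is split. In `Cₙ`, `v` is split by `{v - 1, v}` and `{v, v + 1}`. When a
path `p₀ … p_{l-1}` is attached to the disjoint maximal cliques `A` and `B`, the vertex `pᵢ` is
split by the two cliques of the path on either side of it (`A + p₀` and `B + p_{l-1}` at the
ends), and an old vertex stays split once `A` and `B` are enlarged by the path ends attached to
them: since `A` is a maximal clique, a vertex of `A` is split by `A` and some other clique.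
-/
open SimpleGraph Set

variable {V W : Type} {G : SimpleGraph V}

structure IsNbhdSplit (G : SimpleGraph V) (v : V) (X Y : Set V) : Prop where
  isClique_left : G.IsClique X
  isClique_right : G.IsClique Y
  inter_eq : X ∩ Y = {v}
  nontrivial_left : X.Nontrivial
  nontrivial_right : Y.Nontrivial
  neighborSet_subset : G.neighborSet v ⊆ X ∪ Y
  eq_of_adj : ∀ x ∈ X, ∀ y ∈ Y, G.Adj x y → x = v ∨ y = v

namespace IsNbhdSplit

variable {v : V} {X Y : Set V}

theorem symm (h : IsNbhdSplit G v X Y) : IsNbhdSplit G v Y X where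
  isClique_left := h.isClique_right
  isClique_right := h.isClique_left
  inter_eq := by rw [inter_comm, h.inter_eq]
  nontrivial_left := h.nontrivial_right
  nontrivial_right := h.nontrivial_left
  neighborSet_subset := union_comm X Y ▸ h.neighborSet_subset
  eq_of_adj x hx y hy hxy := (h.eq_of_adj y hy x hx hxy.symm).symm

theorem mem_left (h : IsNbhdSplit G v X Y) : v ∈ X :=
  (h.inter_eq.symm.subset rfl).1

theorem subset_or_subset (h : IsNbhdSplit G v X Y) {s : Set V} (hs : G.IsClique s)
    (hvs : v ∈ s) : s ⊆ X ∨ s ⊆ Y := by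
  by_contra! hcon
  simp only [not_subset] at hcon
  obtain ⟨⟨x, hxs, hxX⟩, y, hys, hyY⟩ := hcon
  have hxv : x ≠ v := fun e => hxX (e ▸ h.mem_left)
  have hyv : y ≠ v := fun e => hyY (e ▸ h.symm.mem_left)
  have hxY : x ∈ Y := (h.neighborSet_subset (hs hvs hxs hxv.symm)).resolve_left hxX
  have hyX : y ∈ X := (h.neighborSet_subset (hs hvs hys hyv.symm)).resolve_right hyY
  have hyx : y ≠ x := fun e => hxX (e ▸ hyX)
  rcases h.eq_of_adj y hyX x hxY (hs hys hxs hyx) with e | e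
  exacts [hyv e, hxv e]

theorem isMaxClique_left (h : IsNbhdSplit G v X Y) : IsMaxClique G X := by
  refine ⟨h.isClique_left, fun t ht hXt => ?_⟩
  rcases h.subset_or_subset ht (hXt h.mem_left) with htX | htY
  · exact hXt.antisymm htX
  · exact absurd (h.inter_eq ▸ subset_inter subset_rfl (hXt.trans htY))
      h.nontrivial_left.not_subset_singleton

theorem eq_or_eq_of_isMaxClique (h : IsNbhdSplit G v X Y) {s : Set V} (hs : IsMaxClique G s)
    (hvs : v ∈ s) : s = X ∨ s = Y :=
  (h.subset_or_subset hs.1 hvs).imp (hs.2 _ h.isClique_left) (hs.2 _ h.isClique_right)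

theorem left_ne_right (h : IsNbhdSplit G v X Y) : X ≠ Y := by
  rintro rfl
  exact h.nontrivial_left.ne_singleton (inter_self X ▸ h.inter_eq)

theorem setOf_isMaxClique_mem_eq (h : IsNbhdSplit G v X Y) :
    {s | IsMaxClique G s ∧ v ∈ s} = {X, Y} := by
  ext s
  constructor
  · rintro ⟨hs, hvs⟩
    exact h.eq_or_eq_of_isMaxClique hs hvs
  · rintro (rfl | rfl)
    exacts [⟨h.isMaxClique_left, h.mem_left⟩, ⟨h.symm.isMaxClique_left, h.symm.mem_left⟩]

theorem image_iso {H : SimpleGraph W} (h : IsNbhdSplit G v X Y) (e : G ≃g H) :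
    IsNbhdSplit H (e v) (e '' X) (e '' Y) := by
  have isClique_image {s : Set V} (hs : G.IsClique s) : H.IsClique (e '' s) := by
    rintro _ ⟨x, hx, rfl⟩ _ ⟨y, hy, rfl⟩ hne
    exact e.map_adj_iff.2 (hs hx hy (ne_of_apply_ne e hne))
  refine ⟨isClique_image h.isClique_left, isClique_image h.isClique_right, ?_,
    h.nontrivial_left.image e.injective, h.nontrivial_right.image e.injective, ?_, ?_⟩
  · rw [← image_inter e.injective, h.inter_eq, image_singleton]
  · intro w hw
    have := h.neighborSet_subset (show G.Adj v (e.symm w) by simpa using e.symm.map_adj_iff.2 hw)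
    rw [← image_union]
    exact ⟨e.symm w, this, by simp⟩
  · rintro _ ⟨x, hx, rfl⟩ _ ⟨y, hy, rfl⟩ hxy
    exact (h.eq_of_adj x hx y hy (e.map_adj_iff.1 hxy)).imp (congrArg e) (congrArg e)

end IsNbhdSplit

open Fin.CommRing in
theorem cycleGraph_isNbhdSplit {n : ℕ} (v : Fin (n + 4)) :
    IsNbhdSplit (cycleGraph (n + 4)) v {v - 1, v} {v, v + 1} := by
  have h1 : (1 : Fin (n + 4)) ≠ 0 := by simp
  have h2 : (2 : Fin (n + 4)) ≠ 0 := by simp [Fin.ext_iff, Nat.mod_eq_of_lt (by omega : 2 < n + 4)]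
  have h3 : (3 : Fin (n + 4)) ≠ 0 := by simp [Fin.ext_iff, Nat.mod_eq_of_lt (by omega : 3 < n + 4)]
  have hpred : v - 1 ≠ v := fun h => h1 (by linear_combination -h)
  have hsucc : v + 1 ≠ v := fun h => h1 (by linear_combination h)
  have hpred_succ : v - 1 ≠ v + 1 := fun h => h2 (by linear_combination -h)
  have not_adj : ¬ (cycleGraph (n + 4)).Adj (v - 1) (v + 1) := by
    rintro (h | h)
    exacts [h3 (by linear_combination -h), h1 (by linear_combination h)]
  refine ⟨?_, ?_, ?_, nontrivial_pair hpred, nontrivial_pair hsucc.symm, ?_, ?_⟩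
  · exact isClique_pair.2 fun _ => Or.inr (by ring)
  · exact isClique_pair.2 fun _ => Or.inr (by ring)
  · ext x
    simp only [mem_inter_iff, mem_insert_iff, mem_singleton_iff]
    grind
  · rw [cycleGraph_neighborSet (n := n + 2)]
    rintro w (rfl | rfl) <;> simp
  · rintro x (rfl | rfl) y (rfl | rfl) hxy <;> simp_all

section JoinPath

open Sum

variable {A B : Set V} {l : ℕ}

@[simp] theorem joinPath_adj_inl_inl {a b : V} :
    (joinPath G A B l).Adj (inl a) (inl b) ↔ G.Adj a b := Iff.rfl

@[simp] theorem joinPath_adj_inl_inr {a : V} {i : Fin l} :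
    (joinPath G A B l).Adj (inl a) (inr i) ↔ (i.val = 0 ∧ a ∈ A) ∨ (i.val = l - 1 ∧ a ∈ B) :=
  Iff.rfl

@[simp] theorem joinPath_adj_inr_inl {a : V} {i : Fin l} :
    (joinPath G A B l).Adj (inr i) (inl a) ↔ (i.val = 0 ∧ a ∈ A) ∨ (i.val = l - 1 ∧ a ∈ B) :=
  Iff.rfl

@[simp] theorem joinPath_adj_inr_inr {i j : Fin l} :
    (joinPath G A B l).Adj (inr i) (inr j) ↔ i.val + 1 = j.val ∨ j.val + 1 = i.val := Iff.rfl

/-- For `0 < j < l` the edge `p_{j-1} p_j` of the path; `A + p_0` for `j = 0` and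
`B + p_{l-1}` for `j = l`. -/
def pathClique (A B : Set V) (l j : ℕ) : Set (V ⊕ Fin l)
  | inl a => (j = 0 ∧ a ∈ A) ∨ (j = l ∧ a ∈ B)
  | inr i => i.val = j ∨ i.val + 1 = j

@[simp] theorem inl_mem_pathClique {a : V} {j : ℕ} :
    inl a ∈ pathClique A B l j ↔ (j = 0 ∧ a ∈ A) ∨ (j = l ∧ a ∈ B) := Iff.rfl

@[simp] theorem inr_mem_pathClique {i : Fin l} {j : ℕ} :
    inr i ∈ pathClique A B l j ↔ i.val = j ∨ i.val + 1 = j := Iff.rfl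

/-- The clique `D` of `G`, together with the end of the path joined to `D`, if any. -/
def liftClique (A B : Set V) (l : ℕ) (D : Set V) : Set (V ⊕ Fin l)
  | inl a => a ∈ D
  | inr i => (i.val = 0 ∧ D = A) ∨ (i.val + 1 = l ∧ D = B)

@[simp] theorem inl_mem_liftClique {a : V} {D : Set V} :
    inl a ∈ liftClique A B l D ↔ a ∈ D := Iff.rfl

@[simp] theorem inr_mem_liftClique {i : Fin l} {D : Set V} :
    inr i ∈ liftClique A B l D ↔ (i.val = 0 ∧ D = A) ∨ (i.val + 1 = l ∧ D = B) := Iff.rfl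

theorem isClique_pathClique (hA : G.IsClique A) (hB : G.IsClique B) (hl : 0 < l) (j : ℕ) :
    (joinPath G A B l).IsClique (pathClique A B l j) := by
  rintro (a | i) hx (b | k) hy hne
  · simp only [inl_mem_pathClique, ne_eq, inl.injEq, joinPath_adj_inl_inl] at hx hy hne ⊢
    rcases hx with ⟨rfl, ha⟩ | ⟨rfl, ha⟩ <;> rcases hy with ⟨hj, hb⟩ | ⟨hj, hb⟩
    exacts [hA ha hb hne, by omega, by omega, hB ha hb hne]
  all_goals simp [Fin.ext_iff] at hx hy hne ⊢; grind

theorem pathClique_nontrivial (hA : A.Nonempty) (hB : B.Nonempty) (hl : 0 < l) {j : ℕ}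
    (hj : j ≤ l) : (pathClique A B l j).Nontrivial := by
  obtain ⟨a, ha⟩ := hA
  obtain ⟨b, hb⟩ := hB
  by_cases h0 : j = 0
  · exact ⟨inl a, by simp [h0, ha], inr ⟨0, hl⟩, by simp [h0], by simp⟩
  by_cases hjl : j = l
  · exact ⟨inl b, by simp [hjl, hb], inr ⟨l - 1, by omega⟩, by simp; omega, by simp⟩
  · exact ⟨inr ⟨j - 1, by omega⟩, by simp; omega, inr ⟨j, by omega⟩, by simp, by simp; omega⟩

theorem isNbhdSplit_joinPath_inr (hAn : A.Nonempty) (hBn : B.Nonempty) (hA : G.IsClique A)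
    (hB : G.IsClique B) (hd : Disjoint A B) (hl : 2 ≤ l) (i : Fin l) :
    IsNbhdSplit (joinPath G A B l) (inr i) (pathClique A B l i) (pathClique A B l (i + 1)) := by
  have hAB : ∀ a ∈ A, a ∉ B := fun _ ha => Set.disjoint_left.1 hd ha
  refine ⟨isClique_pathClique hA hB (by omega) _, isClique_pathClique hA hB (by omega) _, ?_,
    pathClique_nontrivial hAn hBn (by omega) i.isLt.le,
    pathClique_nontrivial hAn hBn (by omega) i.isLt, ?_, ?_⟩
  · ext (a | k) <;> simp [Fin.ext_iff] <;> grind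
  · rintro (a | k) hx <;> simp at hx ⊢ <;> grind
  · rintro (a | k) hx (b | k') hy hxy <;> simp [Fin.ext_iff] at hx hy hxy ⊢ <;> grind

theorem joinPath_adj_inl_inr_iff_mem (hl : 2 ≤ l) {D : Set V} {b : V} {k : Fin l}
    (hk : inr k ∈ liftClique A B l D) : (joinPath G A B l).Adj (inl b) (inr k) ↔ b ∈ D := by
  simp only [inr_mem_liftClique] at hk
  rcases hk with ⟨hk, rfl⟩ | ⟨hk, rfl⟩ <;> simp <;> grind

theorem isClique_liftClique (hd : Disjoint A B) (hl : 2 ≤ l) {D : Set V} (hD : G.IsClique D)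
    (hDn : D.Nonempty) : (joinPath G A B l).IsClique (liftClique A B l D) := by
  have hAB : D = A → D ≠ B := by
    rintro rfl rfl
    obtain ⟨x, hx⟩ := hDn
    exact Set.disjoint_left.1 hd hx hx
  rintro (a | i) hx (b | k) hy hne
  · exact hD hx hy (by simpa using hne)
  · exact (joinPath_adj_inl_inr_iff_mem hl hy).2 hx
  · exact ((joinPath_adj_inl_inr_iff_mem hl hx).2 hy).symm
  · simp [Fin.ext_iff] at hx hy hne ⊢
    grind

theorem IsNbhdSplit.eq_of_joinPath_adj {a b : V} {X Y : Set V} (h : IsNbhdSplit G a X Y)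
    (hl : 2 ≤ l) {k : Fin l} (hb : b ∈ X) (hk : inr k ∈ liftClique A B l Y)
    (hadj : (joinPath G A B l).Adj (inl b) (inr k)) : b = a := by
  simpa using h.inter_eq.subset ⟨hb, (joinPath_adj_inl_inr_iff_mem hl hk).1 hadj⟩

theorem IsNbhdSplit.joinPath_inl {a : V} {X Y : Set V} (h : IsNbhdSplit G a X Y)
    (hA : IsMaxClique G A) (hB : IsMaxClique G B) (hd : Disjoint A B) (hl : 2 ≤ l) :
    IsNbhdSplit (joinPath G A B l) (inl a) (liftClique A B l X) (liftClique A B l Y) := by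
  have not_inr_mem_both {i j : Fin l} (hi : inr i ∈ liftClique A B l X)
      (hj : inr j ∈ liftClique A B l Y) : False := by
    have haA : a ∈ A → a ∉ B := fun ha => Set.disjoint_left.1 hd ha
    simp only [inr_mem_liftClique] at hi hj
    rcases hi with ⟨-, rfl⟩ | ⟨-, rfl⟩ <;> rcases hj with ⟨-, rfl⟩ | ⟨-, rfl⟩
    exacts [h.left_ne_right rfl, haA h.mem_left h.symm.mem_left,
      haA h.symm.mem_left h.mem_left, h.left_ne_right rfl]
  refine ⟨isClique_liftClique hd hl h.isClique_left h.nontrivial_left.nonempty,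
    isClique_liftClique hd hl h.isClique_right h.nontrivial_right.nonempty, ?_,
    (h.nontrivial_left.image inl_injective).mono (by rintro _ ⟨b, hb, rfl⟩; exact hb),
    (h.nontrivial_right.image inl_injective).mono (by rintro _ ⟨b, hb, rfl⟩; exact hb), ?_, ?_⟩
  · ext (b | k)
    · simpa using Set.ext_iff.1 h.inter_eq b
    · simpa using fun hX hY => not_inr_mem_both hX hY
  · rintro (b | k) hadj
    · simpa using h.neighborSet_subset hadj
    · rcases hadj with ⟨hk, ha⟩ | ⟨hk, ha⟩
      · rcases h.eq_or_eq_of_isMaxClique hA ha with rfl | rfl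
        exacts [Or.inl (Or.inl ⟨hk, rfl⟩), Or.inr (Or.inl ⟨hk, rfl⟩)]
      · rcases h.eq_or_eq_of_isMaxClique hB ha with rfl | rfl
        exacts [Or.inl (Or.inr ⟨by omega, rfl⟩), Or.inr (Or.inr ⟨by omega, rfl⟩)]
  · rintro (b | k) hx (c | k') hy hadj
    · exact (h.eq_of_adj b hx c hy hadj).imp (congrArg inl) (congrArg inl)
    · exact Or.inl (congrArg inl (h.eq_of_joinPath_adj hl hx hy hadj))
    · exact Or.inr (congrArg inl (h.symm.eq_of_joinPath_adj hl hy hx hadj.symm))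
    · exact (not_inr_mem_both hx hy).elim

end JoinPath

theorem IsMaxClique.nonempty [Nonempty V] {s : Set V} (hs : IsMaxClique G s) : s.Nonempty := by
  obtain ⟨v⟩ := ‹Nonempty V›
  rw [nonempty_iff_ne_empty]
  rintro rfl
  exact singleton_ne_empty v (hs.2 {v} (isClique_singleton v) (empty_subset _)).symm

theorem IsGate.nonempty (hG : IsGate G) : Nonempty V := by
  induction hG with
  | cycle n hn => exact ⟨⟨0, by omega⟩⟩
  | extend G A B l hG hA hB hd hl ih => exact ⟨Sum.inr ⟨0, by omega⟩⟩
  | iso G H hG e ih => exact ⟨e (Classical.arbitrary _)⟩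

theorem IsGate.exists_isNbhdSplit (hG : IsGate G) : ∀ v, ∃ X Y, IsNbhdSplit G v X Y := by
  induction hG with
  | cycle n hn =>
    obtain ⟨m, rfl⟩ : ∃ m, n = m + 4 := ⟨n - 4, by omega⟩
    exact fun v => ⟨_, _, cycleGraph_isNbhdSplit v⟩
  | extend G A B l hG hA hB hd hl ih =>
    have := hG.nonempty
    rintro (a | i)
    · obtain ⟨X, Y, h⟩ := ih a
      exact ⟨_, _, h.joinPath_inl hA hB hd hl⟩
    · exact ⟨_, _, isNbhdSplit_joinPath_inr hA.nonempty hB.nonempty hA.1 hB.1 hd hl i⟩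
  | iso G H hG e ih =>
    intro w
    obtain ⟨X, Y, h⟩ := ih (e.symm w)
    exact ⟨_, _, by simpa using h.image_iso e⟩

theorem stmt2 {V : Type} (G : SimpleGraph V) (hG : IsGate G) (v : V) :
    {s : Set V | IsMaxClique G s ∧ v ∈ s}.ncard = 2 ∧
    ∀ C₁ C₂ : Set V, IsMaxClique G C₁ → IsMaxClique G C₂ → v ∈ C₁ → v ∈ C₂ →
      C₁ ≠ C₂ → C₁ ∩ C₂ = {v} := by
  obtain ⟨X, Y, h⟩ := hG.exists_isNbhdSplit v
  refine ⟨by rw [h.setOf_isMaxClique_mem_eq, ncard_pair h.left_ne_right], ?_⟩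
  intro C₁ C₂ h₁ h₂ hv₁ hv₂ hne
  rcases h.eq_or_eq_of_isMaxClique h₁ hv₁ with rfl | rfl <;>
    rcases h.eq_or_eq_of_isMaxClique h₂ hv₂ with rfl | rfl
  exacts [absurd rfl hne, h.inter_eq, inter_comm C₁ C₂ ▸ h.inter_eq, absurd rfl hne]
end

section
/- Let ⟨P, T⟩ be an EPT representation of a graph G. If G contains a chordless cycle C_k with k ≥ 4 as an induced subgraph, then ⟨P, T⟩ contains a pie of size k whose paths correspond bijectively to the vertices of the cycle. -/
/-!
Let `Bᵢ` be the set of tree edges shared by `Pᵢ` and `Pᵢ₊₁`. Since the cycle is induced, only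
consecutive paths share edges, and since `Cₖ` is triangle-free for `k ≥ 4`, no edge lies on three
paths. Deleting a tree edge `e` disconnects its endpoints, while the paths avoiding `e` are chained
around the cycle and so lie in a single component of `T - e`. Applied to an edge of `Pᵢ` between a
`Bᵢ₋₁`-edge and a `Bᵢ`-edge, this shows that some vertex of `Pᵢ` is incident to both; applied to an
edge between two such vertices for `i` and `i + 1`, it shows that they coincide. This common vertex
`q` is the centre of the pie, and the other ends of its `Bᵢ`-edges are the `qᵢ`.
-/

namespace SimpleGraph

variable {V : Type*} {G : SimpleGraph V}

lemma Walk.reachable_of_mem_support {u v a b : V} (w : G.Walk u v) (ha : a ∈ w.support)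
    (hb : b ∈ w.support) : G.Reachable a b := by
  classical
  exact ⟨(w.takeUntil a ha).reverse.append (w.takeUntil b hb)⟩

lemma Walk.reachable_deleteEdges_of_mem_support {u v a b : V} {e : Sym2 V} (w : G.Walk u v)
    (he : e ∉ w.edges) (ha : a ∈ w.support) (hb : b ∈ w.support) :
    (G.deleteEdges {e}).Reachable a b :=
  (w.toDeleteEdge e he).reachable_of_mem_support (by rwa [Walk.support_transfer])
    (by rwa [Walk.support_transfer])

lemma Walk.mem_edges_of_not_reachable_deleteEdges_of_mem_support {u v a b : V} {e : Sym2 V}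
    (w : G.Walk u v) (ha : a ∈ w.support) (hb : b ∈ w.support)
    (hab : ¬ (G.deleteEdges {e}).Reachable a b) : e ∈ w.edges := by
  by_contra he
  exact hab (w.reachable_deleteEdges_of_mem_support he ha hb)

lemma IsAcyclic.not_reachable_deleteEdges_of_mem_edges (hG : G.IsAcyclic) {u v : V}
    {e : Sym2 V} {p : G.Walk u v} (hp : p.IsPath) (he : e ∈ p.edges) :
    ¬ (G.deleteEdges {e}).Reachable u v := by
  classical
  rintro ⟨q⟩
  have hpq : p = q.toPath.1.mapLe (deleteEdges_le _) := congrArg Subtype.val <|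
    (hG.subsingleton_path u v).elim ⟨p, hp⟩ ⟨_, q.toPath.2.mapLe _⟩
  have he' : e ∈ (q.toPath : (G.deleteEdges {e}).Walk u v).edges := by
    rwa [hpq, Walk.edges_mapLe_eq_edges] at he
  simpa using Walk.edges_subset_edgeSet _ he'

lemma Walk.exists_incident_of_forall_mem_edges_union {u v : V} {A B : Set (Sym2 V)}
    (p : G.Walk u v) (hp : ∀ e ∈ p.edges, e ∈ A ∪ B) (hu : ∃ e ∈ A, u ∈ e)
    (hv : ∃ e ∈ B, v ∈ e) : ∃ c, (∃ e ∈ A, c ∈ e) ∧ ∃ e ∈ B, c ∈ e := by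
  induction p with
  | nil => exact ⟨_, hu, hv⟩
  | cons h p ih =>
    rcases hp _ (List.mem_cons_self ..) with hA | hB
    · exact ih (fun e he ↦ hp e (List.mem_cons_of_mem _ he)) ⟨_, hA, Sym2.mem_mk_right _ _⟩ hv
    · exact ⟨_, hu, _, hB, Sym2.mem_mk_left _ _⟩

lemma cycleGraph_cliqueFree_three (n : ℕ) : (cycleGraph (n + 4)).CliqueFree 3 := by
  intro t ht
  obtain ⟨a, b, c, hab, hac, hbc, rfl⟩ := is3Clique_iff.mp ht
  rw [cycleGraph_adj] at hab hac hbc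
  have h1 : (1 : Fin (n + 4)) ≠ 0 := by simp
  have h3 : (3 : Fin (n + 4)) ≠ 0 := by simp [Fin.ext_iff, Nat.mod_eq_of_lt]
  rcases hab with hab | hab <;> rcases hac with hac | hac <;> rcases hbc with hbc | hbc <;> grind

end SimpleGraph

open SimpleGraph Fin.CommRing

lemma Fin.natCast_ne_zero_of_pos_of_lt {k m : ℕ} [NeZero k] (h0 : 0 < m) (hm : m < k) :
    (m : Fin k) ≠ 0 := by
  rw [Ne, Fin.natCast_eq_zero]
  exact Nat.not_dvd_of_pos_of_lt h0 hm

lemma Fin.natCast_add_four_eq_zero (n : ℕ) : (n : Fin (n + 4)) + 4 = 0 := by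
  have h : ((n + 4 : ℕ) : Fin (n + 4)) = 0 := Fin.natCast_self _
  push_cast at h
  exact h

lemma finNext_eq_add_one {n : ℕ} (h : 0 < n + 4) (i : Fin (n + 4)) : finNext h i = i + 1 :=
  Fin.ext (by simp [finNext, Fin.val_add])

section CyclicFamily

variable {VT : Type*} {T : SimpleGraph VT} {n : ℕ} {s t : Fin (n + 4) → VT}
  {P : ∀ i, T.Walk (s i) (t i)}

def sharedEdges (P : ∀ i, T.Walk (s i) (t i)) (i : Fin (n + 4)) : Set (Sym2 VT) :=
  {e | e ∈ (P i).edges ∧ e ∈ (P (i + 1)).edges}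

def EdgeIntersectionIsCycle (P : ∀ i, T.Walk (s i) (t i)) : Prop :=
  ∀ i j, i ≠ j → ((∃ e, e ∈ (P i).edges ∧ e ∈ (P j).edges) ↔ (cycleGraph (n + 4)).Adj i j)

namespace EdgeIntersectionIsCycle

lemma sharedEdges_nonempty (hP : EdgeIntersectionIsCycle P) (i : Fin (n + 4)) :
    (sharedEdges P i).Nonempty :=
  (hP i (i + 1) (by simp)).mpr (cycleGraph_adj.mpr (Or.inr (add_sub_cancel_left i 1)))

lemma eq_sub_one_or_eq_add_one_of_mem_edges (hP : EdgeIntersectionIsCycle P)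
    {i j : Fin (n + 4)} {e : Sym2 VT} (hij : i ≠ j) (hi : e ∈ (P i).edges)
    (hj : e ∈ (P j).edges) : j = i - 1 ∨ j = i + 1 := by
  have hadj := (hP i j hij).mp ⟨e, hi, hj⟩
  rwa [← mem_neighborSet, cycleGraph_neighborSet] at hadj

lemma eq_or_eq_or_eq_of_mem_edges (hP : EdgeIntersectionIsCycle P) {a b c : Fin (n + 4)}
    {e : Sym2 VT} (ha : e ∈ (P a).edges) (hb : e ∈ (P b).edges) (hc : e ∈ (P c).edges) :
    a = b ∨ a = c ∨ b = c := by
  by_contra! h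
  obtain ⟨hab, hac, hbc⟩ := h
  exact cycleGraph_cliqueFree_three n {a, b, c} <| is3Clique_triple_iff.mpr
    ⟨(hP a b hab).mp ⟨e, ha, hb⟩, (hP a c hac).mp ⟨e, ha, hc⟩, (hP b c hbc).mp ⟨e, hb, hc⟩⟩

lemma reachable_deleteEdges_of_forall_not_mem_edges (hP : EdgeIntersectionIsCycle P)
    {e : Sym2 VT} {a : Fin (n + 4)} {d : ℕ} (he : ∀ m ≤ d, e ∉ (P (a + m)).edges) {u v : VT}
    (hu : u ∈ (P a).support) (hv : v ∈ (P (a + d)).support) :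
    (T.deleteEdges {e}).Reachable u v := by
  induction d generalizing v with
  | zero =>
    have he₀ := he 0 le_rfl
    rw [Nat.cast_zero, add_zero] at he₀ hv
    exact (P a).reachable_deleteEdges_of_mem_support he₀ hu hv
  | succ d ih =>
    obtain ⟨e', he'₁, he'₂⟩ := hP.sharedEdges_nonempty (a + d)
    have hx₁ := (P _).mem_support_of_mem_edges he'₁ e'.out_fst_mem
    have hx₂ := (P _).mem_support_of_mem_edges he'₂ e'.out_fst_mem
    rw [add_assoc, ← Nat.cast_succ] at hx₂
    exact (ih (fun m hm ↦ he m (by omega)) hx₁).trans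
      ((P _).reachable_deleteEdges_of_mem_support (he (d + 1) le_rfl) hx₂ hv)

lemma exists_mem_sharedEdges_sub_one_and_mem_sharedEdges (hP : EdgeIntersectionIsCycle P)
    (hT : T.IsAcyclic) (i : Fin (n + 4)) :
    ∃ c, (∃ e ∈ sharedEdges P (i - 1), c ∈ e) ∧ ∃ e ∈ sharedEdges P i, c ∈ e := by
  obtain ⟨e₁, he₁, he₁'⟩ := hP.sharedEdges_nonempty (i - 1)
  obtain ⟨e₂, he₂, he₂'⟩ := hP.sharedEdges_nonempty i
  obtain ⟨u, hu⟩ : ∃ u, u ∈ e₁ := ⟨_, e₁.out_fst_mem⟩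
  obtain ⟨v, hv⟩ : ∃ v, v ∈ e₂ := ⟨_, e₂.out_fst_mem⟩
  rw [sub_add_cancel] at he₁'
  have hui := (P i).mem_support_of_mem_edges he₁' hu
  have hvi := (P i).mem_support_of_mem_edges he₂ hv
  obtain ⟨p, hp⟩ := ((P i).reachable_of_mem_support hui hvi).exists_isPath
  refine p.exists_incident_of_forall_mem_edges_union (fun e he ↦ ?_)
    ⟨e₁, ⟨he₁, by rwa [sub_add_cancel]⟩, hu⟩ ⟨e₂, ⟨he₂, he₂'⟩, hv⟩
  have hsep := hT.not_reachable_deleteEdges_of_mem_edges hp he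
  have hei := (P i).mem_edges_of_not_reachable_deleteEdges_of_mem_support hui hvi hsep
  by_contra hAB
  -- `e` lies on no path but `Pᵢ`, so the chain `Pᵢ₊₁, …, Pᵢ₋₁` joins `v` to `u` in `T - e`.
  have hother : ∀ m ≤ n + 2, e ∉ (P (i + 1 + m)).edges := by
    intro m hm hej
    have hne : i ≠ i + 1 + m := by
      intro h
      apply Fin.natCast_ne_zero_of_pos_of_lt (k := n + 4) (m := m + 1) (by omega) (by omega)
      push_cast
      linear_combination -h
    rcases hP.eq_sub_one_or_eq_add_one_of_mem_edges hne hei hej with h | h <;> rw [h] at hej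
    · exact hAB (Or.inl ⟨hej, by rwa [sub_add_cancel]⟩)
    · exact hAB (Or.inr ⟨hei, hej⟩)
  have hu' : u ∈ (P (i + 1 + (n + 2 : ℕ))).support := by
    rw [show i + 1 + ((n + 2 : ℕ) : Fin (n + 4)) = i - 1 by
      push_cast; linear_combination Fin.natCast_add_four_eq_zero n]
    exact (P _).mem_support_of_mem_edges he₁ hu
  exact hsep (hP.reachable_deleteEdges_of_forall_not_mem_edges hother
    ((P _).mem_support_of_mem_edges he₂' hv) hu').symm

lemma eq_of_mem_sharedEdges (hP : EdgeIntersectionIsCycle P) (hT : T.IsAcyclic)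
    {i : Fin (n + 4)} {c c' : VT} (hc₀ : ∃ e ∈ sharedEdges P (i - 1), c ∈ e)
    (hc : ∃ e ∈ sharedEdges P i, c ∈ e) (hc' : ∃ e ∈ sharedEdges P i, c' ∈ e)
    (hc'₁ : ∃ e ∈ sharedEdges P (i + 1), c' ∈ e) : c = c' := by
  obtain ⟨e₀, ⟨he₀, -⟩, hce₀⟩ := hc₀
  obtain ⟨e, ⟨he, he'⟩, hce⟩ := hc
  obtain ⟨e', ⟨hf, hf'⟩, hc'e'⟩ := hc'
  obtain ⟨e₁, ⟨-, he₁⟩, hc'e₁⟩ := hc'₁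
  have hci := (P i).mem_support_of_mem_edges he hce
  have hci₁ := (P _).mem_support_of_mem_edges he' hce
  have hc'i := (P i).mem_support_of_mem_edges hf hc'e'
  have hc'i₁ := (P _).mem_support_of_mem_edges hf' hc'e'
  obtain ⟨p, hp⟩ := ((P i).reachable_of_mem_support hci hc'i).exists_isPath
  by_contra hne
  cases p with
  | nil => exact hne rfl
  | @cons _ x _ _ _ =>
    -- The first edge from `c` towards `c'` lies on `Pᵢ` and `Pᵢ₊₁`, hence on no other path,
    -- yet the chain `Pᵢ₊₂, …, Pᵢ₋₁` joins `c'` to `c` around it.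
    have hsep := hT.not_reachable_deleteEdges_of_mem_edges hp (List.mem_cons_self ..)
    have hmi := (P i).mem_edges_of_not_reachable_deleteEdges_of_mem_support hci hc'i hsep
    have hmi₁ := (P _).mem_edges_of_not_reachable_deleteEdges_of_mem_support hci₁ hc'i₁ hsep
    have hother : ∀ m ≤ n + 1, s(c, x) ∉ (P (i + 2 + m)).edges := by
      intro m hm hmj
      have h₁ := Fin.natCast_ne_zero_of_pos_of_lt (k := n + 4) (m := m + 1) (by omega) (by omega)
      have h₂ := Fin.natCast_ne_zero_of_pos_of_lt (k := n + 4) (m := m + 2) (by omega) (by omega)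
      push_cast at h₁ h₂
      rcases hP.eq_or_eq_or_eq_of_mem_edges hmi hmi₁ hmj with h | h | h
      · simp at h
      · exact h₂ (by linear_combination -h)
      · exact h₁ (by linear_combination -h)
    have hc'₂ : c' ∈ (P (i + 2)).support := by
      rw [show i + 2 = i + 1 + 1 by ring]
      exact (P _).mem_support_of_mem_edges he₁ hc'e₁
    have hc₃ : c ∈ (P (i + 2 + (n + 1 : ℕ))).support := by
      rw [show i + 2 + ((n + 1 : ℕ) : Fin (n + 4)) = i - 1 by
        push_cast; linear_combination Fin.natCast_add_four_eq_zero n]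
      exact (P _).mem_support_of_mem_edges he₀ hce₀
    exact hsep (hP.reachable_deleteEdges_of_forall_not_mem_edges hother hc'₂ hc₃).symm

lemma exists_forall_mem_sharedEdges (hP : EdgeIntersectionIsCycle P) (hT : T.IsAcyclic) :
    ∃ q, ∀ i, ∃ e ∈ sharedEdges P i, q ∈ e := by
  obtain ⟨q, hq⟩ := hP.exists_mem_sharedEdges_sub_one_and_mem_sharedEdges hT 0
  have key : ∀ d : ℕ, (∃ e ∈ sharedEdges P (d - 1), q ∈ e) ∧ ∃ e ∈ sharedEdges P d, q ∈ e := by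
    intro d
    induction d with
    | zero => simpa using hq
    | succ d ih =>
      obtain ⟨c, hc⟩ := hP.exists_mem_sharedEdges_sub_one_and_mem_sharedEdges hT (d + 1)
      rw [add_sub_cancel_right] at hc
      obtain rfl := hP.eq_of_mem_sharedEdges hT ih.1 ih.2 hc.1 hc.2
      simpa using hc
  exact ⟨q, fun i ↦ by simpa using (key i).2⟩

lemma exists_pie (hP : EdgeIntersectionIsCycle P) (hT : T.IsAcyclic) :
    ∃ (q : VT) (qi : Fin (n + 4) → VT), Function.Injective qi ∧ (∀ i, T.Adj q (qi i)) ∧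
      ∀ i, qi i ∈ (P i).support ∧ q ∈ (P i).support ∧ qi (i + 1) ∈ (P i).support := by
  obtain ⟨q, hq⟩ := hP.exists_forall_mem_sharedEdges hT
  choose e he hqe using hq
  set y : Fin (n + 4) → VT := fun i ↦ Sym2.Mem.other (hqe i)
  have hy : ∀ i, s(q, y i) ∈ (P i).edges ∧ s(q, y i) ∈ (P (i + 1)).edges := fun i ↦ by
    rw [Sym2.other_spec]; exact he i
  have hy_inj : Function.Injective y := by
    intro i j hij
    have hj := hy j
    rw [← hij] at hj
    rcases hP.eq_or_eq_or_eq_of_mem_edges (hy i).1 (hy i).2 hj.1 with h | h | rfl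
    · simp at h
    · exact h
    · rcases hP.eq_or_eq_or_eq_of_mem_edges (hy i).1 (hy i).2 hj.2 with h | h | h
      · simp at h
      · exact absurd (by push_cast; linear_combination -h)
          (Fin.natCast_ne_zero_of_pos_of_lt (k := n + 4) (m := 2) (by omega) (by omega))
      · simp at h
  refine ⟨q, fun i ↦ y (i - 1), hy_inj.comp sub_left_injective,
    fun i ↦ (P _).adj_of_mem_edges (hy (i - 1)).1,
    fun i ↦ ⟨?_, (P i).fst_mem_support_of_mem_edges (hy i).1, ?_⟩⟩
  · have h := (hy (i - 1)).2
    rw [sub_add_cancel] at h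
    exact (P i).snd_mem_support_of_mem_edges h
  · show y (i + 1 - 1) ∈ _
    rw [add_sub_cancel_right]
    exact (P i).snd_mem_support_of_mem_edges (hy i).1

end EdgeIntersectionIsCycle

end CyclicFamily

theorem stmt8 {V : Type} (G : SimpleGraph V) (R : EPTRep G) (k : ℕ) (hk : 4 ≤ k)
    (f : SimpleGraph.cycleGraph k ↪g G) :
    ∃ (q : R.VT) (qi : Fin k → R.VT), Function.Injective qi ∧
      (∀ i, R.T.Adj q (qi i)) ∧
      ∀ i : Fin k, qi i ∈ (R.walk (f i)).support ∧ q ∈ (R.walk (f i)).support ∧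
        qi (finNext (by omega) i) ∈ (R.walk (f i)).support := by
  obtain ⟨n, rfl⟩ : ∃ n, k = n + 4 := ⟨k - 4, by omega⟩
  have hP : EdgeIntersectionIsCycle (fun i ↦ R.walk (f i)) := fun i j hij ↦
    (R.adj_iff _ _ (f.injective.ne hij)).symm.trans f.map_rel_iff
  simpa only [finNext_eq_add_one] using hP.exists_pie R.tree.isAcyclic
end

section
/- Every EPT representation ⟨P, T⟩ of a graph G can be modified to one in which no endpoint of any path P_v has degree greater than 2 in the host tree: subdividing every edge of T into three edges (and correspondingly each path), then deleting the two end vertices of each subdivided path, yields an EPT representation of G with the same maximum host-tree degree in which every path endpoint has tree-degree at most 2; moreover this modification preserves the Helly property. -/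
/-
Replace every edge `ab` of the host tree by a path `a – x – y – b` with two new vertices. The result
is again a tree, old vertices keep their degree and new ones have degree 2. Lift every path and
delete its two end vertices: the trimmed lift of a nontrivial path starts and ends at new vertices,
still contains the middle edge `xy` over each of its original edges, and each of its edges lies over
one of them. Hence two trimmed paths share an edge iff the original paths do, and a common edge of a
family of original paths gives a common middle edge, so adjacency and the Helly property survive.
Because new vertices have degree 2, the construction is only used when the host tree has a vertex of
degree at least 3; otherwise the representation is left as it is.
-/

namespace SimpleGraph

open Sum

variable {V : Type*} {G : SimpleGraph V}

theorem Reachable.map_of_forall_adj {V' : Type*} {G' : SimpleGraph V'} (f : V → V')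
    (hf : ∀ ⦃x y⦄, G.Adj x y → G'.Reachable (f x) (f y)) {u v : V} (h : G.Reachable u v) :
    G'.Reachable (f u) (f v) := by
  rw [reachable_iff_reflTransGen] at h ⊢
  exact h.lift' f fun x y hxy => (reachable_iff_reflTransGen _ _).1 (hf hxy)

variable (G) in
/-- Every edge `ab` becomes the path `a – (a, b) – (b, a) – b`: the new vertex next to `d.fst` on
the edge `d.edge` is the dart `d`. -/
def subdivide : SimpleGraph (V ⊕ G.Dart) where
  Adj
    | inl _, inl _ => False
    | inl a, inr d => d.fst = a
    | inr d, inl a => d.fst = a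
    | inr d, inr d' => d' = d.symm
  symm := by
    constructor
    rintro (a | d) (b | d') h
    exacts [h, h, h, by simp only at h ⊢; rw [h, Dart.symm_symm]]
  loopless := by
    constructor
    rintro (a | d) h
    exacts [h, d.symm_ne h.symm]

@[simp] theorem subdivide_adj_inl_inl {a b : V} : ¬ G.subdivide.Adj (inl a) (inl b) := id
@[simp] theorem subdivide_adj_inl_inr {a : V} {d : G.Dart} :
    G.subdivide.Adj (inl a) (inr d) ↔ d.fst = a := .rfl
@[simp] theorem subdivide_adj_inr_inl {a : V} {d : G.Dart} :
    G.subdivide.Adj (inr d) (inl a) ↔ d.fst = a := .rfl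
@[simp] theorem subdivide_adj_inr_inr {d d' : G.Dart} :
    G.subdivide.Adj (inr d) (inr d') ↔ d' = d.symm := .rfl

theorem neighborSet_subdivide_inr (d : G.Dart) :
    G.subdivide.neighborSet (inr d) = {inl d.fst, inr d.symm} := by
  ext (a | d') <;> simp [eq_comm]

theorem ncard_neighborSet_subdivide_inr (d : G.Dart) :
    (G.subdivide.neighborSet (inr d)).ncard = 2 := by
  rw [neighborSet_subdivide_inr, Set.ncard_pair (by simp)]

theorem neighborSet_subdivide_inl (a : V) :
    G.subdivide.neighborSet (inl a) = inr '' {d | d.fst = a} := by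
  ext (b | d) <;> simp

theorem ncard_neighborSet_subdivide_inl (a : V) :
    (G.subdivide.neighborSet (inl a)).ncard = (G.neighborSet a).ncard := by
  rw [neighborSet_subdivide_inl, Set.ncard_image_of_injective _ inr_injective]
  refine Set.ncard_congr (fun d _ => d.snd) (fun d hd => ?_) (fun d d' hd hd' h => ?_) ?_
  · exact (show d.fst = a from hd) ▸ d.adj
  · exact Dart.ext _ _ (Prod.ext (hd.trans hd'.symm) h)
  · exact fun b hb => ⟨⟨(a, b), hb⟩, rfl, rfl⟩

theorem exists_eq_inr_of_subdivide_adj_inl {a : V} {x : V ⊕ G.Dart}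
    (h : G.subdivide.Adj (inl a) x) : ∃ d, x = inr d := by
  rcases x with b | d
  · exact absurd h subdivide_adj_inl_inl
  · exact ⟨d, rfl⟩

theorem Connected.subdivide (hG : G.Connected) : G.subdivide.Connected := by
  have hinl : ∀ a b : V, G.subdivide.Reachable (inl a) (inl b) := by
    refine fun a b => (hG a b).map_of_forall_adj inl fun x y hxy => ?_
    let d : G.Dart := ⟨(x, y), hxy⟩
    exact ((Adj.reachable (v := inr d) rfl).trans (Adj.reachable (v := inr d.symm) rfl)).trans
      (Adj.reachable (rfl : d.symm.fst = y))
  have : Nonempty V := hG.nonempty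
  rw [connected_iff_exists_forall_reachable]
  refine ⟨inl (Classical.arbitrary V), ?_⟩
  rintro (b | d)
  · exact hinl _ _
  · exact (hinl _ d.fst).trans (Adj.reachable rfl)

theorem IsAcyclic.isBridge_of_map {W : Type*} {G' : SimpleGraph W} (hG : G.IsAcyclic)
    (f : W → V) {x y : W} (hxy : G.Adj (f x) (f y))
    (hf : ∀ ⦃u v⦄, G'.Adj u v → s(u, v) ≠ s(x, y) →
      (G.deleteEdges {s(f x, f y)}).Reachable (f u) (f v)) :
    G'.IsBridge s(x, y) := by
  rw [isBridge_iff]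
  intro h
  refine isBridge_iff.1 (isAcyclic_iff_forall_adj_isBridge.1 hG hxy) (h.map_of_forall_adj f ?_)
  intro u v huv
  rw [deleteEdges_adj, Set.mem_singleton_iff] at huv
  exact hf huv.1 huv.2

theorem Dart.reachable_deleteEdges {d d' : G.Dart} (h : d' ≠ d) (h' : d' ≠ d.symm) :
    (G.deleteEdges {d.edge}).Reachable d'.fst d'.snd := by
  refine Adj.reachable ((deleteEdges_adj ..).2 ⟨d'.adj, ?_⟩)
  rw [Set.mem_singleton_iff, ← Dart.edge, dart_edge_eq_iff]
  tauto

theorem IsAcyclic.isBridge_subdivide_side (hG : G.IsAcyclic) (d : G.Dart) :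
    G.subdivide.IsBridge s(inl d.fst, inr d) := by
  classical
  refine hG.isBridge_of_map (Sum.elim id fun e : G.Dart => if e = d then d.snd else e.fst)
    (by simp [d.adj]) ?_
  rintro (u | e) (v | e') huv hne
  · exact absurd huv subdivide_adj_inl_inl
  · simp only [subdivide_adj_inl_inr] at huv
    subst huv
    have : e' ≠ d := by rintro rfl; exact hne rfl
    simp [this]
  · simp only [subdivide_adj_inr_inl] at huv
    subst huv
    have : e ≠ d := by rintro rfl; exact hne Sym2.eq_swap
    simp [this]
  · simp only [subdivide_adj_inr_inr] at huv
    subst huv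
    by_cases h : e = d
    · subst h; simp [e.symm_ne]
    by_cases h' : e = d.symm
    · subst h'; simp [d.symm_ne]
    have h'' : e.symm ≠ d := fun he => h' (he ▸ e.symm_symm.symm)
    simpa [h, h'', Dart.edge] using Dart.reachable_deleteEdges h h'

theorem IsAcyclic.isBridge_subdivide_mid (hG : G.IsAcyclic) (d : G.Dart) :
    G.subdivide.IsBridge s(inr d, inr d.symm) := by
  refine hG.isBridge_of_map (Sum.elim id fun e : G.Dart => e.fst) d.adj ?_
  rintro (u | e) (v | e') huv hne
  · exact absurd huv subdivide_adj_inl_inl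
  · simp only [subdivide_adj_inl_inr] at huv
    simp [huv]
  · simp only [subdivide_adj_inr_inl] at huv
    simp [huv]
  · simp only [subdivide_adj_inr_inr] at huv
    subst huv
    refine Dart.reachable_deleteEdges ?_ ?_ <;> rintro rfl <;> simp_all [Sym2.eq_swap]

theorem IsAcyclic.subdivide (hG : G.IsAcyclic) : G.subdivide.IsAcyclic := by
  rw [isAcyclic_iff_forall_adj_isBridge]
  rintro (a | d) (b | d') hadj
  · exact absurd hadj subdivide_adj_inl_inl
  · rw [subdivide_adj_inl_inr] at hadj
    subst hadj
    exact hG.isBridge_subdivide_side d'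
  · rw [subdivide_adj_inr_inl] at hadj
    subst hadj
    rw [Sym2.eq_swap]
    exact hG.isBridge_subdivide_side d
  · rw [subdivide_adj_inr_inr] at hadj
    subst hadj
    exact hG.isBridge_subdivide_mid d

theorem IsTree.subdivide (hG : G.IsTree) : G.subdivide.IsTree :=
  ⟨hG.connected.subdivide, hG.isAcyclic.subdivide⟩

/-- The edge of `G` on which an edge of `G.subdivide` lies (the value on two old vertices is
irrelevant: they are never adjacent). -/
def baseEdge : Sym2 (V ⊕ G.Dart) → Sym2 V :=
  Sym2.lift ⟨fun x y => match x, y with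
    | inl a, inl b => s(a, b)
    | inl _, inr d | inr d, inl _ => d.edge
    | inr d, inr d' => s(d.fst, d'.fst), by rintro (a | d) (b | d') <;> simp [Sym2.eq_swap]⟩

namespace Walk

variable {u v : V}

theorem mem_edges_tail_of_notMem {e : Sym2 V} {p : G.Walk u v} (he : e ∈ p.edges)
    (hu : u ∉ e) : e ∈ p.tail.edges := by
  cases p with
  | nil => simp at he
  | cons h p =>
    rw [edges_cons, List.mem_cons] at he
    rcases he with rfl | he
    · simp at hu
    · simpa using he

theorem mem_edges_dropLast_of_notMem {e : Sym2 V} {p : G.Walk u v} (he : e ∈ p.edges)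
    (hv : v ∉ e) : e ∈ p.dropLast.edges := by
  have hp : ¬ p.Nil := fun hp => by simp [edges_eq_nil.2 hp] at he
  rw [← concat_dropLast (p.adj_penultimate hp), edges_concat, List.concat_eq_append,
    List.mem_append, List.mem_singleton] at he
  rcases he with he | rfl
  · exact he
  · simp at hv

def subdivide : ∀ {u v : V}, G.Walk u v → G.subdivide.Walk (inl u) (inl v)
  | _, _, nil => nil
  | u, _, @cons _ _ _ w _ h p =>
    cons (subdivide_adj_inl_inr.2 rfl : G.subdivide.Adj (inl u) (inr ⟨(u, w), h⟩))
      (cons (subdivide_adj_inr_inr.2 rfl : G.subdivide.Adj _ (inr ⟨(w, u), h.symm⟩))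
        (cons (subdivide_adj_inr_inl.2 rfl : G.subdivide.Adj _ (inl w)) p.subdivide))

theorem mem_support_subdivide_inl {x : V} (p : G.Walk u v) :
    inl x ∈ p.subdivide.support ↔ x ∈ p.support := by
  induction p with
  | nil => simp [subdivide]
  | cons h p ih => simp [subdivide, ih]

theorem mem_support_subdivide_inr {d : G.Dart} (p : G.Walk u v) :
    inr d ∈ p.subdivide.support ↔ d.edge ∈ p.edges := by
  induction p with
  | nil => simp [subdivide]
  | cons h p ih => simp [subdivide, ih, dart_edge_eq_mk'_iff, Dart.ext_iff, or_assoc]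

theorem IsPath.subdivide {p : G.Walk u v} (hp : p.IsPath) : p.subdivide.IsPath := by
  induction p with
  | nil => simp [Walk.subdivide]
  | @cons u w _ h p ih =>
    obtain ⟨hp, hu⟩ := cons_isPath_iff _ _ |>.1 hp
    have hu' : ∀ x, s(x, u) ∉ p.edges ∧ s(u, x) ∉ p.edges := fun x =>
      ⟨fun he => hu (p.snd_mem_support_of_mem_edges he),
        fun he => hu (p.fst_mem_support_of_mem_edges he)⟩
    simp [Walk.subdivide, mem_support_subdivide_inl, mem_support_subdivide_inr, ih hp, hu, hu',
      Dart.edge, h.ne]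

theorem baseEdge_mem_edges {e : Sym2 (V ⊕ G.Dart)} {p : G.Walk u v}
    (he : e ∈ p.subdivide.edges) : baseEdge e ∈ p.edges := by
  induction p with
  | nil => simp [Walk.subdivide] at he
  | cons h p ih =>
    simp only [Walk.subdivide, edges_cons, List.mem_cons] at he
    rcases he with rfl | rfl | rfl | he
    iterate 3 simp [baseEdge, Dart.edge]
    exact List.mem_cons_of_mem _ (ih he)

theorem mid_mem_edges_subdivide {d : G.Dart} {p : G.Walk u v} (hd : d.edge ∈ p.edges) :
    s(inr d, inr d.symm) ∈ p.subdivide.edges := by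
  induction p with
  | nil => simp at hd
  | @cons u w _ h p ih =>
    rw [edges_cons, List.mem_cons, dart_edge_eq_mk'_iff] at hd
    rcases hd with (hd | hd) | hd
    · obtain rfl : d = ⟨(u, w), h⟩ := Dart.ext _ _ hd
      simp [Walk.subdivide]
    · obtain rfl : d = ⟨(w, u), h.symm⟩ := Dart.ext _ _ hd
      simp [Walk.subdivide, Sym2.eq_swap]
    · simp [Walk.subdivide, ih hd]

theorem length_subdivide (p : G.Walk u v) : p.subdivide.length = 3 * p.length := by
  induction p with
  | nil => rfl
  | cons h p ih =>
    rw [Walk.subdivide, length_cons, length_cons, length_cons, ih, length_cons]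
    ring

theorem subdivide_nil_iff {p : G.Walk u v} : p.subdivide.Nil ↔ p.Nil := by
  simp [← length_eq_zero_iff, length_subdivide]

theorem penultimate_tail_subdivide {p : G.Walk u v} (hp : ¬ p.Nil) :
    p.subdivide.tail.penultimate = p.subdivide.penultimate := by
  rw [not_nil_iff_lt_length] at hp
  simp only [penultimate, getVert_tail, length_tail, length_subdivide]
  congr 1
  omega

variable (d₀ : G.Dart)

/- A trivial path has no edges, so it may be placed anywhere; it is put at the subdivision vertex
`d₀` so that its endpoint has degree 2. -/
def trimmedStart (p : G.Walk u v) : V ⊕ G.Dart :=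
  if p.Nil then inr d₀ else p.subdivide.snd

def trimmedEnd (p : G.Walk u v) : V ⊕ G.Dart :=
  if p.Nil then inr d₀ else p.subdivide.penultimate

def trimmedSubdivide (p : G.Walk u v) :
    G.subdivide.Walk (p.trimmedStart d₀) (p.trimmedEnd d₀) :=
  if hp : p.Nil then
    (nil (u := inr d₀)).copy (by simp [trimmedStart, hp]) (by simp [trimmedEnd, hp])
  else p.subdivide.tail.dropLast.copy (by simp [trimmedStart, hp])
    (by simp [trimmedEnd, hp, penultimate_tail_subdivide hp])

variable {d₀}

theorem IsPath.trimmedSubdivide {p : G.Walk u v} (hp : p.IsPath) :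
    (p.trimmedSubdivide d₀).IsPath := by
  unfold Walk.trimmedSubdivide
  split_ifs
  · simp
  · simpa using hp.subdivide.tail.dropLast

theorem mem_edges_subdivide_of_mem_edges_trimmedSubdivide {e : Sym2 (V ⊕ G.Dart)}
    {p : G.Walk u v} (he : e ∈ (p.trimmedSubdivide d₀).edges) : e ∈ p.subdivide.edges := by
  unfold Walk.trimmedSubdivide at he
  split_ifs at he
  · simp at he
  · simp only [edges_copy, edges_dropLast, edges_tail] at he
    exact List.tail_subset _ (List.dropLast_subset _ he)

theorem mid_mem_edges_trimmedSubdivide {d : G.Dart} {p : G.Walk u v} (hd : d.edge ∈ p.edges) :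
    s(inr d, inr d.symm) ∈ (p.trimmedSubdivide d₀).edges := by
  have hp : ¬ p.Nil := fun hp => by simp [edges_eq_nil.2 hp] at hd
  simp only [Walk.trimmedSubdivide, hp, dite_false, edges_copy]
  exact mem_edges_dropLast_of_notMem (mem_edges_tail_of_notMem (mid_mem_edges_subdivide hd)
    (by simp)) (by simp)

theorem trimmedStart_eq_inr (p : G.Walk u v) : ∃ d, p.trimmedStart d₀ = inr d := by
  unfold trimmedStart
  split_ifs with hp
  · exact ⟨d₀, rfl⟩
  · exact exists_eq_inr_of_subdivide_adj_inl (p.subdivide.adj_snd (subdivide_nil_iff.not.2 hp))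

theorem trimmedEnd_eq_inr (p : G.Walk u v) : ∃ d, p.trimmedEnd d₀ = inr d := by
  unfold trimmedEnd
  split_ifs with hp
  · exact ⟨d₀, rfl⟩
  · exact exists_eq_inr_of_subdivide_adj_inl
      (p.subdivide.adj_penultimate (subdivide_nil_iff.not.2 hp)).symm

end Walk

end SimpleGraph

namespace EPTRep

open SimpleGraph Sum

variable {V : Type} {G : SimpleGraph V} (R : EPTRep G) (d₀ : R.T.Dart)

def subdivide : EPTRep G where
  VT := R.VT ⊕ R.T.Dart
  T := R.T.subdivide
  tree := R.tree.subdivide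
  src v := (R.walk v).trimmedStart d₀
  tgt v := (R.walk v).trimmedEnd d₀
  walk v := (R.walk v).trimmedSubdivide d₀
  isPath v := (R.isPath v).trimmedSubdivide
  adj_iff v w hvw := by
    rw [R.adj_iff v w hvw]
    constructor
    · rintro ⟨e, hv, hw⟩
      obtain ⟨d, -, rfl⟩ := List.mem_map.1 hv
      exact ⟨_, Walk.mid_mem_edges_trimmedSubdivide hv, Walk.mid_mem_edges_trimmedSubdivide hw⟩
    · rintro ⟨e, hv, hw⟩
      exact ⟨baseEdge e,
        Walk.baseEdge_mem_edges (Walk.mem_edges_subdivide_of_mem_edges_trimmedSubdivide hv),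
        Walk.baseEdge_mem_edges (Walk.mem_edges_subdivide_of_mem_edges_trimmedSubdivide hw)⟩

variable {R d₀}

theorem baseEdge_mem_edges_subdivide {v : V} {e : Sym2 (R.VT ⊕ R.T.Dart)}
    (he : e ∈ (R.subdivide d₀).edges v) : baseEdge e ∈ R.edges v :=
  Walk.baseEdge_mem_edges (Walk.mem_edges_subdivide_of_mem_edges_trimmedSubdivide he)

theorem mid_mem_edges_subdivide {v : V} {d : R.T.Dart} (hd : d.edge ∈ R.edges v) :
    s(inr d, inr d.symm) ∈ (R.subdivide d₀).edges v :=
  Walk.mid_mem_edges_trimmedSubdivide hd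

theorem Helly.subdivide (hR : R.Helly) : (R.subdivide d₀).Helly := by
  intro S hS hpair
  obtain ⟨e, he⟩ := hR S hS fun u hu v hv => by
    obtain ⟨e, heu, hev⟩ := hpair u hu v hv
    exact ⟨baseEdge e, baseEdge_mem_edges_subdivide heu, baseEdge_mem_edges_subdivide hev⟩
  rw [Set.mem_iInter₂] at he
  obtain ⟨v₀, hv₀⟩ := hS
  obtain ⟨d, -, rfl⟩ := List.mem_map.1 (he v₀ hv₀)
  exact ⟨_, Set.mem_iInter₂.2 fun v hv => mid_mem_edges_subdivide (he v hv)⟩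

theorem maxDegLE_subdivide {h : ℕ} (hR : R.maxDegLE h) (h2 : 2 ≤ h) :
    (R.subdivide d₀).maxDegLE h := by
  rintro (a | d)
  · exact (ncard_neighborSet_subdivide_inl a).trans_le (hR a)
  · exact (ncard_neighborSet_subdivide_inr d).trans_le h2

theorem ncard_neighborSet_src_subdivide (v : V) :
    ((R.subdivide d₀).T.neighborSet ((R.subdivide d₀).src v)).ncard = 2 := by
  obtain ⟨d, hd⟩ := (R.walk v).trimmedStart_eq_inr (d₀ := d₀)
  show (R.T.subdivide.neighborSet ((R.walk v).trimmedStart d₀)).ncard = 2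
  rw [hd, ncard_neighborSet_subdivide_inr]

theorem ncard_neighborSet_tgt_subdivide (v : V) :
    ((R.subdivide d₀).T.neighborSet ((R.subdivide d₀).tgt v)).ncard = 2 := by
  obtain ⟨d, hd⟩ := (R.walk v).trimmedEnd_eq_inr (d₀ := d₀)
  show (R.T.subdivide.neighborSet ((R.walk v).trimmedEnd d₀)).ncard = 2
  rw [hd, ncard_neighborSet_subdivide_inr]

end EPTRep

theorem stmt18 {V : Type} (G : SimpleGraph V) (R : EPTRep G) :
    ∃ R' : EPTRep G,
      (∀ h : ℕ, R.maxDegLE h → R'.maxDegLE h) ∧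
      (∀ v : V, (R'.T.neighborSet (R'.src v)).ncard ≤ 2 ∧
                (R'.T.neighborSet (R'.tgt v)).ncard ≤ 2) ∧
      (R.Helly → R'.Helly) := by
  by_cases hdeg : R.maxDegLE 2
  · exact ⟨R, fun _ hR => hR, fun v => ⟨hdeg _, hdeg _⟩, id⟩
  obtain ⟨x, hx⟩ := not_forall.1 hdeg
  obtain ⟨y, hy⟩ := Set.nonempty_of_ncard_ne_zero (by omega : (R.T.neighborSet x).ncard ≠ 0)
  refine ⟨R.subdivide ⟨(x, y), hy⟩, fun h hR => R.maxDegLE_subdivide hR ?_,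
    fun v => ⟨(R.ncard_neighborSet_src_subdivide v).le, (R.ncard_neighborSet_tgt_subdivide v).le⟩,
    EPTRep.Helly.subdivide⟩
  have := hR x
  omega
end
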